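/- Let Ω₁,…,Ωₙ (n≥2) be closed subsets of a Banach space X, ωᵢ ∈ Ωᵢ (i=1,…,n), ε > 0 and φ ∈ 𝒞. Suppose ∩_{i=1}^n Ωᵢ = ∅ and φ(max_{1≤i≤n−1}‖ωₙ−ωᵢ‖) < φ(d(Ω₁,…,Ωₙ)) + ε. Then for any λ > 0 and η > 0 there exist points ωᵢ' ∈ Ωᵢ ∩ B_λ(ωᵢ) (i=1,…,n−1) and ωₙ' ∈ Ωₙ ∩ B_η(ωₙ) such that: (a) 0 < max_{1≤i≤n−1}‖ωₙ'−ωᵢ'‖ ≤ max_{1≤i≤n−1}‖ωₙ−ωᵢ‖; and (b) sup over all uᵢ ∈ Ωᵢ (i=1,…,n) with (u₁,…,uₙ) ≠ (ω₁',…,ωₙ') of [φ(max_{1≤i≤n−1}‖ωₙ'−ωᵢ'‖) − φ(max_{1≤i≤n−1}‖uₙ−uᵢ‖)] / ‖(u₁−ω₁',…,uₙ−ωₙ')‖_{λ,η} is strictly less than ε. -/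

import Mathlib

/-!
Rescale the coordinates by `λ⁻¹` and `η⁻¹`, so that `‖·‖_{λ,η}` becomes the sup norm, and apply
Ekeland's variational principle to `u ↦ φ (max_i ‖uₙ - uᵢ‖)` on the closed set `Ω₁ × ⋯ × Ωₙ`,
starting at `ω` with a slope `c` such that `φ (max_i ‖ωₙ - ωᵢ‖) - φ (d) < c < ε`. Along the way
the function drops by at most `φ (max_i ‖ωₙ - ωᵢ‖) - φ (d) < c`, so the Ekeland point `ω'` lies
within rescaled distance `1` of `ω`; its strict minimality for the perturbed function is (b), and
`max_i ‖ω'ₙ - ω'ᵢ‖ > 0` because the sets have no common point.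
-/

open Filter

/-- The nonintersect index `d(Ω₁,…,Ω_m,Ωₙ) = inf{ max_i ‖uₙ − uᵢ‖ : uᵢ ∈ Ωᵢ, uₙ ∈ Ωₙ }`. -/
noncomputable def nonintersectIndex {X : Type*} [NormedAddCommGroup X] {m : ℕ}
    (Ω : Fin m → Set X) (Ωn : Set X) : ℝ :=
  sInf {r : ℝ | ∃ (u : Fin m → X) (un : X),
    (∀ i, u i ∈ Ω i) ∧ un ∈ Ωn ∧ r = ⨆ i, ‖un - u i‖}

open Topology Set Metric

section Ekeland

variable {α : Type*} [MetricSpace α] {f : α → ℝ} {ε : ℝ} {x y : α}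

def ekelandSet (f : α → ℝ) (ε : ℝ) (x : α) : Set α :=
  {y | f y + ε * dist x y ≤ f x}

lemma mem_ekelandSet : y ∈ ekelandSet f ε x ↔ f y + ε * dist x y ≤ f x := Iff.rfl

lemma self_mem_ekelandSet : x ∈ ekelandSet f ε x := by
  simp [mem_ekelandSet]

lemma ekelandSet_subset (hε : 0 ≤ ε) (hy : y ∈ ekelandSet f ε x) :
    ekelandSet f ε y ⊆ ekelandSet f ε x := fun z hz => by
  have := mul_le_mul_of_nonneg_left (dist_triangle x y z) hε
  rw [mem_ekelandSet] at hy hz ⊢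
  linarith

lemma isClosed_ekelandSet (hf : LowerSemicontinuous f) : IsClosed (ekelandSet f ε x) :=
  (hf.add (continuous_const.mul (continuous_const.dist continuous_id)).lowerSemicontinuous)
    |>.isClosed_preimage (f x)

lemma exists_almost_isMinOn_ekelandSet (hbdd : BddBelow (range f)) {δ : ℝ} (hδ : 0 < δ) :
    ∃ y ∈ ekelandSet f ε x, ∀ z ∈ ekelandSet f ε x, f y ≤ f z + δ := by
  have hbdd' : BddBelow (f '' ekelandSet f ε x) := hbdd.mono (image_subset_range _ _)
  obtain ⟨_, ⟨y, hy, rfl⟩, hlt⟩ := exists_lt_of_csInf_lt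
    ((Set.nonempty_of_mem self_mem_ekelandSet).image f) (lt_add_of_pos_right _ hδ)
  exact ⟨y, hy, fun z hz => hlt.le.trans (by gcongr; exact csInf_le hbdd' (mem_image_of_mem f hz))⟩

lemma ekelandSet_subset_closedBall (hε : 0 < ε) (hy : y ∈ ekelandSet f ε x) {δ : ℝ}
    (hmin : ∀ z ∈ ekelandSet f ε x, f y ≤ f z + δ) :
    ekelandSet f ε y ⊆ closedBall y (δ / ε) := fun z hz => by
  have := hmin z (ekelandSet_subset hε.le hy hz)
  rw [mem_ekelandSet] at hz
  rw [mem_closedBall, dist_comm, le_div_iff₀ hε]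
  linarith

theorem exists_ekeland [CompleteSpace α] (hf : LowerSemicontinuous f) (hbdd : BddBelow (range f))
    (hε : 0 < ε) (x₀ : α) :
    ∃ p, f p + ε * dist x₀ p ≤ f x₀ ∧ ∀ q, q ≠ p → f p < f q + ε * dist p q := by
  choose next hnext_mem hnext_min using fun (x : α) (n : ℕ) =>
    exists_almost_isMinOn_ekelandSet (ε := ε) (x := x) hbdd (Nat.one_div_pos_of_nat (n := n))
  -- `x (n + 1)` minimises `f` on `ekelandSet f ε (x n)` up to `1 / (n + 1)`, so the nested
  -- closed sets `s n` shrink to a point, which is the one sought.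
  let x : ℕ → α := fun n => Nat.rec x₀ (fun k y => next y k) n
  let s : ℕ → Set α := fun n => ekelandSet f ε (x (n + 1))
  have hanti : Antitone fun n => ekelandSet f ε (x n) :=
    antitone_nat_of_succ_le fun n => ekelandSet_subset hε.le (hnext_mem _ _)
  have hball (n : ℕ) : s n ⊆ closedBall (x (n + 1)) (1 / (n + 1) / ε) :=
    ekelandSet_subset_closedBall hε (hnext_mem _ _) (hnext_min _ _)
  have hbounded (n : ℕ) : Bornology.IsBounded (s n) := isBounded_closedBall.subset (hball n)
  have hdiam : Tendsto (fun n => diam (s n)) atTop (𝓝 0) := by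
    have hlim : Tendsto (fun n : ℕ => 2 * (1 / ((n : ℝ) + 1) / ε)) atTop (𝓝 0) := by
      simpa using (tendsto_one_div_add_atTop_nhds_zero_nat.div_const ε).const_mul 2
    exact squeeze_zero (fun n => diam_nonneg)
      (fun n => diam_le_of_subset_closedBall (by positivity) (hball n)) hlim
  obtain ⟨p, hp⟩ := nonempty_iInter_of_nonempty_biInter (fun n => isClosed_ekelandSet hf)
    hbounded (fun N => ⟨x (N + 1), mem_iInter₂.2 fun n hn =>
      hanti (Nat.succ_le_succ hn) self_mem_ekelandSet⟩) hdiam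
  rw [mem_iInter] at hp
  refine ⟨p, hanti (Nat.zero_le 1) (hp 0), fun q hqp => ?_⟩
  by_contra! hq
  have hq_mem (n : ℕ) : q ∈ s n := ekelandSet_subset hε.le (hp n) hq
  refine hqp (dist_le_zero.1 (ge_of_tendsto' hdiam fun n => ?_))
  exact dist_le_diam_of_mem (hbounded n) (hq_mem n) (hp n)

theorem IsClosed.exists_ekeland [CompleteSpace α] {S : Set α} (hS : IsClosed S)
    (hf : LowerSemicontinuous f) (hbdd : BddBelow (f '' S)) (hε : 0 < ε) {x₀ : α} (hx₀ : x₀ ∈ S) :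
    ∃ p ∈ S, f p + ε * dist x₀ p ≤ f x₀ ∧ ∀ q ∈ S, q ≠ p → f p < f q + ε * dist p q := by
  have := hS.isComplete.completeSpace_coe
  obtain ⟨p, hp₀, hp⟩ := _root_.exists_ekeland (f := f ∘ Subtype.val)
    (hf.comp continuous_subtype_val) (by rwa [range_comp, Subtype.range_coe]) hε ⟨x₀, hx₀⟩
  exact ⟨p, p.2, hp₀, fun q hq hqp => hp ⟨q, hq⟩ fun h => hqp (congrArg Subtype.val h)⟩

end Ekeland

section ParamNorm

variable {ι E : Type*} [NormedAddCommGroup E] {lam eta : ℝ}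

/-- The parametric norm `‖·‖_{λ,η}` on `Xⁿ`, the last coordinate playing the role of `uₙ`. -/
noncomputable def paramNorm (lam eta : ℝ) (v : (ι → E) × E) : ℝ :=
  max (⨆ i, lam⁻¹ * ‖v.1 i‖) (eta⁻¹ * ‖v.2‖)

lemma paramNorm_nonneg (heta : 0 ≤ eta) (v : (ι → E) × E) : 0 ≤ paramNorm lam eta v :=
  le_max_of_le_right (mul_nonneg (inv_nonneg.2 heta) (norm_nonneg _))

variable [Fintype ι]

lemma Pi.norm_eq_iSup_norm (v : ι → E) : ‖v‖ = ⨆ i, ‖v i‖ :=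
  le_antisymm
    ((pi_norm_le_iff_of_nonneg (Real.iSup_nonneg fun _ => norm_nonneg _)).2
      fun i => le_ciSup (f := fun i => ‖v i‖) (Finite.bddAbove_range _) i)
    (Real.iSup_le (norm_le_pi_norm v) (norm_nonneg _))

lemma norm_lt_of_paramNorm_lt_one (hlam : 0 < lam) (heta : 0 < eta) {v : (ι → E) × E}
    (hv : paramNorm lam eta v < 1) : (∀ i, ‖v.1 i‖ < lam) ∧ ‖v.2‖ < eta := by
  rw [paramNorm, max_lt_iff, inv_mul_lt_iff₀ heta, mul_one] at hv
  refine ⟨fun i => ?_, hv.2⟩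
  have := (le_ciSup (Finite.bddAbove_range fun i => lam⁻¹ * ‖v.1 i‖) i).trans_lt hv.1
  rwa [inv_mul_lt_iff₀ hlam, mul_one] at this

variable [NormedSpace ℝ E]

lemma paramNorm_eq_norm (hlam : 0 ≤ lam) (heta : 0 ≤ eta) (v : (ι → E) × E) :
    paramNorm lam eta v = ‖(lam⁻¹ • v.1, eta⁻¹ • v.2)‖ := by
  simp only [paramNorm, Prod.norm_def, norm_smul, Real.norm_of_nonneg (inv_nonneg.2 hlam),
    Real.norm_of_nonneg (inv_nonneg.2 heta), Pi.norm_eq_iSup_norm,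
    Real.mul_iSup_of_nonneg (inv_nonneg.2 hlam)]

lemma dist_smul_eq_paramNorm (hlam : 0 ≤ lam) (heta : 0 ≤ eta) (v w : (ι → E) × E) :
    dist (lam⁻¹ • v.1, eta⁻¹ • v.2) (lam⁻¹ • w.1, eta⁻¹ • w.2) = paramNorm lam eta (v - w) := by
  rw [paramNorm_eq_norm hlam heta, dist_eq_norm]
  simp only [Prod.mk_sub_mk, Prod.fst_sub, Prod.snd_sub, smul_sub]

/-- Rescaling the coordinates by `lam⁻¹` and `eta⁻¹` turns `paramNorm lam eta` into the sup norm,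
so this is Ekeland's principle in the rescaled space. -/
theorem IsClosed.exists_ekeland_paramNorm [CompleteSpace E] {A : Set ((ι → E) × E)}
    (hA : IsClosed A) {G : (ι → E) × E → ℝ} (hG : LowerSemicontinuous G)
    (hbdd : BddBelow (G '' A)) {c : ℝ} (hc : 0 < c) (hlam : 0 < lam) (heta : 0 < eta)
    {x₀ : (ι → E) × E} (hx₀ : x₀ ∈ A) :
    ∃ p ∈ A, G p + c * paramNorm lam eta (p - x₀) ≤ G x₀ ∧
      ∀ q ∈ A, q ≠ p → G p < G q + c * paramNorm lam eta (q - p) := by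
  let σ : (ι → E) × E → (ι → E) × E := fun v => (lam⁻¹ • v.1, eta⁻¹ • v.2)
  let τ : (ι → E) × E → (ι → E) × E := fun w => (lam • w.1, eta • w.2)
  have hτσ (v : (ι → E) × E) : τ (σ v) = v := by
    simp [σ, τ, smul_inv_smul₀ hlam.ne', smul_inv_smul₀ heta.ne']
  have hτ : Continuous τ := by fun_prop
  obtain ⟨p, hpA, hp₀, hp⟩ := (hA.preimage hτ).exists_ekeland (hG.comp hτ)
    (hbdd.mono (by rw [image_comp]; exact image_mono (image_preimage_subset τ A))) hc
    (x₀ := σ x₀) (by simpa [hτσ] using hx₀)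
  have hστ : σ (τ p) = p := by
    simp [σ, τ, inv_smul_smul₀ hlam.ne', inv_smul_smul₀ heta.ne']
  have hdist (v w : (ι → E) × E) : dist (σ v) (σ w) = paramNorm lam eta (v - w) :=
    dist_smul_eq_paramNorm hlam.le heta.le v w
  refine ⟨τ p, hpA, ?_, fun q hq hqp => ?_⟩
  · rw [← hdist, hστ, dist_comm]
    simpa only [Function.comp_apply, hτσ] using hp₀
  · rw [← hdist, hστ, dist_comm]
    simpa only [Function.comp_apply, hτσ] using
      hp (σ q) (by simpa [hτσ] using hq) fun h => hqp (by rw [← hτσ q, h])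

end ParamNorm

section Spread

variable {ι X : Type*} [Fintype ι] [NormedAddCommGroup X]

lemma continuous_iSup_norm_sub : Continuous fun u : (ι → X) × X => ⨆ i, ‖u.2 - u.1 i‖ := by
  have : (fun u : (ι → X) × X => ⨆ i, ‖u.2 - u.1 i‖) = fun u => ‖fun i => u.2 - u.1 i‖ :=
    funext fun u => (Pi.norm_eq_iSup_norm _).symm
  rw [this]
  fun_prop

lemma iSup_norm_sub_pos {Ω : ι → Set X} {Ωn : Set X} (hne : (⋂ i, Ω i) ∩ Ωn = ∅)
    {u : ι → X} (hu : ∀ i, u i ∈ Ω i) {un : X} (hun : un ∈ Ωn) : 0 < ⨆ i, ‖un - u i‖ := by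
  rw [← Pi.norm_eq_iSup_norm (fun i => un - u i), norm_pos_iff]
  intro h
  have hmem : un ∈ (⋂ i, Ω i) ∩ Ωn :=
    ⟨mem_iInter.2 fun i => sub_eq_zero.1 (congrFun h i) ▸ hu i, hun⟩
  rwa [hne] at hmem

end Spread

section NonintersectIndex

variable {X : Type*} [NormedAddCommGroup X] {m : ℕ} {Ω : Fin m → Set X} {Ωn : Set X}

lemma nonintersectIndex_nonneg : 0 ≤ nonintersectIndex Ω Ωn :=
  Real.sInf_nonneg <| by
    rintro r ⟨u, un, -, -, rfl⟩
    exact Real.iSup_nonneg fun _ => norm_nonneg _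

lemma nonintersectIndex_le {u : Fin m → X} (hu : ∀ i, u i ∈ Ω i) {un : X} (hun : un ∈ Ωn) :
    nonintersectIndex Ω Ωn ≤ ⨆ i, ‖un - u i‖ :=
  csInf_le ⟨0, by rintro r ⟨u, un, -, -, rfl⟩; exact Real.iSup_nonneg fun _ => norm_nonneg _⟩
    ⟨u, un, hu, hun, rfl⟩

lemma MonotoneOn.map_nonintersectIndex_le {φ : ℝ → ℝ} (hφ : MonotoneOn φ (Ici 0))
    {u : Fin m → X} (hu : ∀ i, u i ∈ Ω i) {un : X} (hun : un ∈ Ωn) :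
    φ (nonintersectIndex Ω Ωn) ≤ φ (⨆ i, ‖un - u i‖) :=
  hφ nonintersectIndex_nonneg (nonintersectIndex_nonneg.trans (nonintersectIndex_le hu hun))
    (nonintersectIndex_le hu hun)

end NonintersectIndex

theorem stmt9_general {X : Type*} [NormedAddCommGroup X] [NormedSpace ℝ X] [CompleteSpace X]
    {m : ℕ} (Ω : Fin m → Set X) (Ωn : Set X)
    (hΩ : ∀ i, IsClosed (Ω i)) (hΩn : IsClosed Ωn)
    (ω : Fin m → X) (ωn : X) (hω : ∀ i, ω i ∈ Ω i) (hωn : ωn ∈ Ωn)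
    (ε : ℝ)
    (φ : ℝ → ℝ) (hφmono : StrictMonoOn φ (Set.Ici 0))
    (hφcont : ContinuousOn φ (Set.Ici 0))
    (hne : (⋂ i, Ω i) ∩ Ωn = ∅)
    (hd : φ (⨆ i, ‖ωn - ω i‖) < φ (nonintersectIndex Ω Ωn) + ε) :
    ∀ lam > (0 : ℝ), ∀ eta > (0 : ℝ),
      ∃ (ω' : Fin m → X) (ωn' : X),
        (∀ i, ω' i ∈ Ω i ∩ Metric.ball (ω i) lam) ∧ ωn' ∈ Ωn ∩ Metric.ball ωn eta ∧
        0 < (⨆ i, ‖ωn' - ω' i‖) ∧ (⨆ i, ‖ωn' - ω' i‖) ≤ (⨆ i, ‖ωn - ω i‖) ∧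
        ∃ c < ε, ∀ (u : Fin m → X) (un : X), (∀ i, u i ∈ Ω i) → un ∈ Ωn →
          ¬(u = ω' ∧ un = ωn') →
          φ (⨆ i, ‖ωn' - ω' i‖) - φ (⨆ i, ‖un - u i‖) ≤
            c * max (⨆ i, lam⁻¹ * ‖u i - ω' i‖) (eta⁻¹ * ‖un - ωn'‖) := by
  intro lam hlam eta heta
  let G : (Fin m → X) × X → ℝ := fun u => φ (⨆ i, ‖u.2 - u.1 i‖)
  have hspread_nonneg (u : (Fin m → X) × X) : 0 ≤ ⨆ i, ‖u.2 - u.1 i‖ :=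
    Real.iSup_nonneg fun _ => norm_nonneg _
  have hG : Continuous G := hφcont.comp_continuous continuous_iSup_norm_sub hspread_nonneg
  have hGA (u) (hu : u ∈ univ.pi Ω ×ˢ Ωn) : φ (nonintersectIndex Ω Ωn) ≤ G u :=
    hφmono.monotoneOn.map_nonintersectIndex_le (fun i => hu.1 i trivial) hu.2
  have hgap : φ (nonintersectIndex Ω Ωn) ≤ G (ω, ωn) := hGA _ ⟨fun i _ => hω i, hωn⟩
  obtain ⟨c, hgap_c, hcε⟩ := exists_between (sub_lt_iff_lt_add'.2 hd)
  have hc : 0 < c := by linarith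
  obtain ⟨p, ⟨hp, hpn⟩, hp₀, hslope⟩ :=
    ((isClosed_set_pi fun i _ => hΩ i).prod hΩn).exists_ekeland_paramNorm hG.lowerSemicontinuous
      ⟨_, forall_mem_image.2 hGA⟩ hc hlam heta (x₀ := (ω, ωn)) ⟨fun i _ => hω i, hωn⟩
  have hdrop := mul_nonneg hc.le (paramNorm_nonneg (lam := lam) heta.le (p - (ω, ωn)))
  have hnear : paramNorm lam eta (p - (ω, ωn)) < 1 :=
    (mul_lt_iff_lt_one_right hc).1 (by linarith [hGA p ⟨hp, hpn⟩])
  obtain ⟨hball, hballn⟩ := norm_lt_of_paramNorm_lt_one hlam heta hnear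
  refine ⟨p.1, p.2, fun i => ⟨hp i trivial, mem_ball_iff_norm.2 (hball i)⟩,
    ⟨hpn, mem_ball_iff_norm.2 hballn⟩, iSup_norm_sub_pos hne (fun i => hp i trivial) hpn,
    (hφmono.le_iff_le (hspread_nonneg p) (hspread_nonneg (ω, ωn))).1 (by linarith), c, hcε,
    fun u un hu hun hup => ?_⟩
  exact sub_le_iff_le_add'.2 (hslope (u, un) ⟨fun i _ => hu i, hun⟩
    fun h => hup ⟨congrArg Prod.fst h, congrArg Prod.snd h⟩).le

/-- slope necessary conditions for a collection of sets with empty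
intersection, around given points `ωᵢ ∈ Ωᵢ`. -/
theorem stmt9 {X : Type*} [NormedAddCommGroup X] [NormedSpace ℝ X] [CompleteSpace X]
    {m : ℕ} (hm : 1 ≤ m) (Ω : Fin m → Set X) (Ωn : Set X)
    (hΩ : ∀ i, IsClosed (Ω i)) (hΩn : IsClosed Ωn)
    (ω : Fin m → X) (ωn : X) (hω : ∀ i, ω i ∈ Ω i) (hωn : ωn ∈ Ωn)
    (ε : ℝ) (hε : 0 < ε)
    (φ : ℝ → ℝ) (hφmono : StrictMonoOn φ (Set.Ici 0))
    (hφcont : ContinuousOn φ (Set.Ici 0)) (hφ0 : φ 0 = 0)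
    (hφtop : Tendsto φ atTop atTop)
    (hne : (⋂ i, Ω i) ∩ Ωn = ∅)
    (hd : φ (⨆ i, ‖ωn - ω i‖) < φ (nonintersectIndex Ω Ωn) + ε) :
    ∀ lam > (0 : ℝ), ∀ eta > (0 : ℝ),
      ∃ (ω' : Fin m → X) (ωn' : X),
        (∀ i, ω' i ∈ Ω i ∩ Metric.ball (ω i) lam) ∧ ωn' ∈ Ωn ∩ Metric.ball ωn eta ∧
        0 < (⨆ i, ‖ωn' - ω' i‖) ∧ (⨆ i, ‖ωn' - ω' i‖) ≤ (⨆ i, ‖ωn - ω i‖) ∧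
        ∃ c < ε, ∀ (u : Fin m → X) (un : X), (∀ i, u i ∈ Ω i) → un ∈ Ωn →
          ¬(u = ω' ∧ un = ωn') →
          φ (⨆ i, ‖ωn' - ω' i‖) - φ (⨆ i, ‖un - u i‖) ≤
            c * max (⨆ i, lam⁻¹ * ‖u i - ω' i‖) (eta⁻¹ * ‖un - ωn'‖) :=
  stmt9_general Ω Ωn hΩ hΩn ω ωn hω hωn ε φ hφmono hφcont hne hd
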